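/- Let T be a reduced well-ve-dominated tree with at least 6 vertices, and let e = uv be an edge of T both of whose endpoints lie in W_T (a unit-cut edge). Let T_u and T_v be the two components of T − e (deleting only the edge e), containing u and v respectively. Then T_u and T_v are well-ve-dominated trees and γ_ve(T) = γ_ve(T_u) + γ_ve(T_v). -/

import Mathlib

/-!
Each endpoint of the cut edge `uv` is adjacent to the support `s` of a good pendant edge `sl`
lying on its own side (for `|V| > 4` the support next to `v` cannot be `u`, the only exception
being the path `P₄`). On the side of `v` take `E ⊆ T_v - {v, l}` inclusion-minimal among the sets
ve-dominating every edge of `T_v - v`. Then `s ∈ E` (to dominate `sl`), so `E` also dominates the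
edges at `v`, and every vertex of `E` has a private edge in `T_v - v`, which no vertex of `T_u`
can reach. Consequently `D ∪ E` is a minimal ve-dominating set of `T` for every minimal
ve-dominating set `D` of `T_u`, so all such `D` have `γ_ve(T) - |E|` vertices. By symmetry `T_v`
is well-ve-dominated too, `E` is a minimal ve-dominating set of `T_v`, and the sum formula follows.
-/

open SimpleGraph

/-- A vertex `v` ve-dominates an edge `e` if at least one endpoint of `e`
lies in the closed neighborhood `N[v]` of `v`. -/
def VEDominates {V : Type*} (G : SimpleGraph V) (v : V) (e : Sym2 V) : Prop :=
  ∃ x ∈ e, x = v ∨ G.Adj v x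

/-- `D` is a ve-dominating set of `G`: every edge of `G` is ve-dominated
by some vertex of `D`. -/
def IsVEDomSet {V : Type*} (G : SimpleGraph V) (D : Set V) : Prop :=
  ∀ e ∈ G.edgeSet, ∃ v ∈ D, VEDominates G v e

/-- `D` is a minimal ve-dominating set of `G`: it is ve-dominating and no
proper subset of `D` is ve-dominating. -/
def IsMinimalVEDomSet {V : Type*} (G : SimpleGraph V) (D : Set V) : Prop :=
  IsVEDomSet G D ∧ ∀ D' : Set V, D' ⊂ D → ¬ IsVEDomSet G D'

/-- `G` is well-ve-dominated: all minimal ve-dominating sets have the same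
cardinality. -/
def WellVEDominated {V : Type*} (G : SimpleGraph V) : Prop :=
  ∀ D₁ D₂ : Set V, IsMinimalVEDomSet G D₁ → IsMinimalVEDomSet G D₂ →
    D₁.ncard = D₂.ncard

/-- `γ_ve(G)`: the minimum cardinality of a ve-dominating set of `G`. -/
noncomputable def gammaVE {V : Type*} (G : SimpleGraph V) : ℕ :=
  sInf {n | ∃ D : Set V, IsVEDomSet G D ∧ D.ncard = n}

/-- `G` is reduced: no two distinct vertices share the same open neighborhood. -/
def Reduced {V : Type*} (G : SimpleGraph V) : Prop :=
  ∀ x y : V, G.neighborSet x = G.neighborSet y → x = y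

/-- `s l` form a good pendant edge of `G`: `l` is a leaf (degree 1) and its
support vertex `s` has degree 2. -/
def IsGoodPendant {V : Type*} (G : SimpleGraph V) (s l : V) : Prop :=
  G.Adj s l ∧ (G.neighborSet l).ncard = 1 ∧ (G.neighborSet s).ncard = 2

/-- `L_T`: the leaf endpoints of the good pendant edges. -/
def goodLeaves {V : Type*} (G : SimpleGraph V) : Set V :=
  {l | ∃ s, IsGoodPendant G s l}

/-- `S_T`: the support vertices of the good pendant edges. -/
def goodSupports {V : Type*} (G : SimpleGraph V) : Set V :=
  {s | ∃ l, IsGoodPendant G s l}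

/-- `W_T = N(S_T) \ L_T`: non-leaf neighbors of support vertices of good
pendant edges. -/
def goodW {V : Type*} (G : SimpleGraph V) : Set V :=
  {v | ∃ s ∈ goodSupports G, G.Adj v s} \ goodLeaves G

/-- The set of good pendant edges of `G`. -/
def goodPendantEdges {V : Type*} (G : SimpleGraph V) : Set (Sym2 V) :=
  {e | ∃ s l, IsGoodPendant G s l ∧ e = s(s, l)}

namespace SimpleGraph

variable {V : Type*} {G : SimpleGraph V}

lemma Connected.eq_univ_of_neighborSet_subset (hG : G.Connected) {S : Set V}
    (hS : ∀ x ∈ S, G.neighborSet x ⊆ S) (hne : S.Nonempty) : S = Set.univ := by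
  obtain ⟨x, hx⟩ := hne
  refine Set.eq_univ_of_forall fun y => ?_
  obtain ⟨p⟩ := hG.preconnected x y
  induction p with
  | nil => exact hx
  | cons h _ ih => exact ih (hS _ hx h)

section Bridge

variable {u v : V}

theorem isCompl_supp_deleteEdges (hG : G.Connected) (hb : G.IsBridge s(u, v)) :
    IsCompl ((G.deleteEdges {s(u, v)}).connectedComponentMk u).supp
      ((G.deleteEdges {s(u, v)}).connectedComponentMk v).supp := by
  rw [isBridge_iff, ← ConnectedComponent.eq] at hb
  refine ⟨Set.disjoint_left.mpr fun x hxu hxv => hb (hxu.symm.trans hxv), ?_⟩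
  rw [codisjoint_iff]
  refine hG.eq_univ_of_neighborSet_subset ?_ ⟨u, Or.inl rfl⟩
  intro x hx y hxy
  by_cases he : s(x, y) = s(u, v)
  · rcases Sym2.eq_iff.mp he with ⟨-, rfl⟩ | ⟨-, rfl⟩
    · exact Or.inr rfl
    · exact Or.inl rfl
  · have hG' : (G.deleteEdges {s(u, v)}).Adj x y := by simp [(mem_neighborSet _ _ _).mp hxy, he]
    simpa only [Set.sup_eq_union, Set.mem_union, ConnectedComponent.mem_supp_iff,
      ← ConnectedComponent.connectedComponentMk_eq_of_adj hG'] using hx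

theorem eq_and_eq_of_adj_of_mem_supp (hb : G.IsBridge s(u, v)) {x y : V}
    (hx : x ∈ ((G.deleteEdges {s(u, v)}).connectedComponentMk u).supp)
    (hy : y ∈ ((G.deleteEdges {s(u, v)}).connectedComponentMk v).supp) (hxy : G.Adj x y) :
    x = u ∧ y = v := by
  rw [isBridge_iff, ← ConnectedComponent.eq] at hb
  rw [ConnectedComponent.mem_supp_iff] at hx hy
  by_cases he : s(x, y) = s(u, v)
  · rcases Sym2.eq_iff.mp he with h | ⟨rfl, rfl⟩
    · exact h
    · exact (hb hy).elim
  · have hG' : (G.deleteEdges {s(u, v)}).Adj x y := by simp [hxy, he]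
    exact (hb (hx.symm.trans
      ((ConnectedComponent.connectedComponentMk_eq_of_adj hG').trans hy))).elim

theorem induce_deleteEdges_of_notMem {S : Set V} (h : u ∉ S ∨ v ∉ S) :
    (G.deleteEdges {s(u, v)}).induce S = G.induce S := by
  ext ⟨a, ha⟩ ⟨b, hb⟩
  simp only [comap_adj, Function.Embedding.subtype_apply, deleteEdges_adj, Set.mem_singleton_iff,
    and_iff_left_iff_imp]
  rintro - he
  rcases Sym2.eq_iff.mp he with ⟨rfl, rfl⟩ | ⟨rfl, rfl⟩ <;> tauto

end Bridge

theorem isTree_induce_supp (hG : G.IsAcyclic) (C : G.ConnectedComponent) :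
    (G.induce C.supp).IsTree :=
  ⟨(ConnectedComponent.maximal_connected_induce_supp C).prop, hG.induce _⟩

end SimpleGraph

section VEDomination

variable {V : Type*} {G : SimpleGraph V}

lemma veDominates_mk_iff {d x y : V} :
    VEDominates G d s(x, y) ↔ x = d ∨ G.Adj d x ∨ y = d ∨ G.Adj d y := by
  simp [VEDominates, or_assoc]

lemma veDominates_induce_mk_iff {S : Set V} {d x y : S} :
    VEDominates (G.induce S) d s(x, y) ↔ VEDominates G d s(↑x, ↑y) := by
  simp [veDominates_mk_iff, Subtype.ext_iff]

lemma isVEDomSet_iff_forall_adj {D : Set V} :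
    IsVEDomSet G D ↔ ∀ x y, G.Adj x y → ∃ d ∈ D, VEDominates G d s(x, y) := by
  simp [IsVEDomSet, Sym2.forall]

lemma isVEDomSet_univ : IsVEDomSet G Set.univ :=
  isVEDomSet_iff_forall_adj.mpr fun x _ _ => ⟨x, trivial, veDominates_mk_iff.mpr (Or.inl rfl)⟩

lemma isVEDomSet_induce_iff {S : Set V} {D : Set S} :
    IsVEDomSet (G.induce S) D ↔
      ∀ x ∈ S, ∀ y ∈ S, G.Adj x y → ∃ d ∈ Subtype.val '' D, VEDominates G d s(x, y) := by
  simp [isVEDomSet_iff_forall_adj, veDominates_induce_mk_iff]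

def IsVEPrivateEdge (G : SimpleGraph V) (D : Set V) (z x y : V) : Prop :=
  G.Adj x y ∧ ∀ d ∈ D, VEDominates G d s(x, y) → d = z

lemma isVEPrivateEdge_induce_iff {S : Set V} {D : Set S} {z x y : S} :
    IsVEPrivateEdge (G.induce S) D z x y ↔ IsVEPrivateEdge G (Subtype.val '' D) z x y := by
  simp [IsVEPrivateEdge, veDominates_induce_mk_iff, Subtype.ext_iff]

lemma IsVEPrivateEdge.union {D₁ D₂ : Set V} {z x y : V} (h : IsVEPrivateEdge G D₁ z x y)
    (h₂ : ∀ d ∈ D₂, ¬VEDominates G d s(x, y)) : IsVEPrivateEdge G (D₁ ∪ D₂) z x y :=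
  ⟨h.1, fun d hd hdom => hd.elim (fun hd => h.2 d hd hdom) fun hd => (h₂ d hd hdom).elim⟩

theorem isMinimalVEDomSet_iff {D : Set V} :
    IsMinimalVEDomSet G D ↔ IsVEDomSet G D ∧ ∀ z ∈ D, ∃ x y, IsVEPrivateEdge G D z x y := by
  refine ⟨fun ⟨hdom, hmin⟩ => ⟨hdom, fun z hz => ?_⟩, fun ⟨hdom, hpriv⟩ => ⟨hdom, ?_⟩⟩
  · have hnot := hmin (D \ {z}) (Set.sdiff_singleton_ssubset.mpr hz)
    simp only [isVEDomSet_iff_forall_adj, not_forall, not_exists, not_and] at hnot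
    obtain ⟨x, y, hxy, hx⟩ := hnot
    exact ⟨x, y, hxy, fun d hd hdom => by_contra fun hdz => hx d ⟨hd, hdz⟩ hdom⟩
  · rintro D' ⟨hD'D, hDD'⟩ hdom'
    obtain ⟨z, hzD, hzD'⟩ := Set.not_subset.mp hDD'
    obtain ⟨x, y, hxy, hpriv⟩ := hpriv z hzD
    obtain ⟨d, hd, hdom⟩ := isVEDomSet_iff_forall_adj.mp hdom' x y hxy
    exact hzD' (hpriv d (hD'D hd) hdom ▸ hd)

theorem exists_isMinimalVEDomSet_ncard_eq_gammaVE [Finite V] (G : SimpleGraph V) :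
    ∃ D, IsMinimalVEDomSet G D ∧ D.ncard = gammaVE G := by
  obtain ⟨D, hD, hcard⟩ : gammaVE G ∈ {n | ∃ D : Set V, IsVEDomSet G D ∧ D.ncard = n} :=
    Nat.sInf_mem ⟨_, Set.univ, isVEDomSet_univ, rfl⟩
  refine ⟨D, ⟨hD, fun D' hD'D hD' => ?_⟩, hcard⟩
  have hle : gammaVE G ≤ D'.ncard := Nat.sInf_le ⟨D', hD', rfl⟩
  exact (Set.ncard_lt_ncard hD'D).not_ge (hcard ▸ hle)

theorem WellVEDominated.ncard_eq_gammaVE [Finite V] (hW : WellVEDominated G) {D : Set V}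
    (hD : IsMinimalVEDomSet G D) : D.ncard = gammaVE G := by
  obtain ⟨D₀, hD₀, hcard⟩ := exists_isMinimalVEDomSet_ncard_eq_gammaVE G
  exact hcard ▸ hW D D₀ hD hD₀

end VEDomination

section Robust

variable {V : Type*} {G : SimpleGraph V} {A B E : Set V} {v : V}

/-- The part on the side `B` of a minimal ve-dominating set, when `v` is the only vertex of `B`
with neighbours outside `B`: its private edges avoid `v`, so no vertex across the cut reaches them,
and it can be glued to every minimal ve-dominating set of the other side. -/
structure IsRobustVEDomSet (G : SimpleGraph V) (B : Set V) (v : V) (E : Set V) : Prop where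
  subset : E ⊆ B \ {v}
  exists_adj : ∃ s ∈ E, G.Adj s v
  dominates : ∀ x ∈ B \ {v}, ∀ y ∈ B \ {v}, G.Adj x y → ∃ d ∈ E, VEDominates G d s(x, y)
  exists_isVEPrivateEdge : ∀ z ∈ E, ∃ x ∈ B \ {v}, ∃ y ∈ B \ {v}, IsVEPrivateEdge G E z x y

namespace IsRobustVEDomSet

variable (hE : IsRobustVEDomSet G B v E)
include hE

lemma exists_veDominates_of_mem {x y : V} (hv : v ∈ s(x, y)) :
    ∃ d ∈ E, VEDominates G d s(x, y) := by
  obtain ⟨s, hs, hsv⟩ := hE.exists_adj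
  refine ⟨s, hs, veDominates_mk_iff.mpr ?_⟩
  rcases Sym2.mem_iff.mp hv with rfl | rfl <;> simp [hsv]

lemma exists_veDominates {x y : V} (hx : x ∈ B) (hy : y ∈ B) (hxy : G.Adj x y) :
    ∃ d ∈ E, VEDominates G d s(x, y) := by
  by_cases hv : v ∈ s(x, y)
  · exact hE.exists_veDominates_of_mem hv
  · rw [Sym2.mem_iff, not_or] at hv
    exact hE.dominates x ⟨hx, Ne.symm hv.1⟩ y ⟨hy, Ne.symm hv.2⟩ hxy

lemma image_preimage_val : Subtype.val '' (Subtype.val ⁻¹' E : Set B) = E := by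
  rw [Subtype.image_preimage_coe]
  exact Set.inter_eq_right.mpr (hE.subset.trans Set.sdiff_subset)

theorem isMinimalVEDomSet_induce :
    IsMinimalVEDomSet (G.induce B) (Subtype.val ⁻¹' E) := by
  refine isMinimalVEDomSet_iff.mpr ⟨?_, fun z hz => ?_⟩
  · rw [isVEDomSet_induce_iff, hE.image_preimage_val]
    exact fun x hx y hy hxy => hE.exists_veDominates hx hy hxy
  · obtain ⟨x, hx, y, hy, hpriv⟩ := hE.exists_isVEPrivateEdge z hz
    refine ⟨⟨x, hx.1⟩, ⟨y, hy.1⟩, ?_⟩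
    rwa [isVEPrivateEdge_induce_iff, hE.image_preimage_val]

theorem isMinimalVEDomSet_union (hAB : IsCompl A B)
    (hcut : ∀ x ∈ A, ∀ y ∈ B, G.Adj x y → y = v) {D : Set A}
    (hD : IsMinimalVEDomSet (G.induce A) D) :
    IsMinimalVEDomSet G (Subtype.val '' D ∪ E) := by
  have hsep : ∀ a ∈ A, ∀ b ∈ B \ {v}, b ≠ a ∧ ¬G.Adj a b := fun a ha b hb =>
    ⟨(hAB.disjoint.ne_of_mem ha hb.1).symm, fun h => hb.2 (hcut a ha b hb.1 h)⟩
  have hAdom : ∀ d ∈ A, ∀ x ∈ B \ {v}, ∀ y ∈ B \ {v}, ¬VEDominates G d s(x, y) := by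
    intro d hd x hx y hy
    have := hsep d hd x hx
    have := hsep d hd y hy
    rw [veDominates_mk_iff]
    tauto
  have hBdom : ∀ d ∈ B \ {v}, ∀ x ∈ A, ∀ y ∈ A, ¬VEDominates G d s(x, y) := by
    intro d hd x hx y hy
    have := hsep x hx d hd
    have := hsep y hy d hd
    rw [veDominates_mk_iff, G.adj_comm d x, G.adj_comm d y]
    grind
  have hcover : ∀ x, x ∈ A ∨ x ∈ B := Set.eq_univ_iff_forall.mp hAB.sup_eq_top
  refine isMinimalVEDomSet_iff.mpr ⟨isVEDomSet_iff_forall_adj.mpr fun x y hxy => ?_, ?_⟩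
  · suffices (∃ d ∈ E, VEDominates G d s(x, y)) ∨ ∃ d ∈ Subtype.val '' D, VEDominates G d s(x, y) by
      obtain ⟨d, hd, hdom⟩ | ⟨d, hd, hdom⟩ := this
      exacts [⟨d, Or.inr hd, hdom⟩, ⟨d, Or.inl hd, hdom⟩]
    rcases hcover x with hx | hx <;> rcases hcover y with hy | hy
    · exact Or.inr (isVEDomSet_induce_iff.mp hD.1 x hx y hy hxy)
    · exact Or.inl (hE.exists_veDominates_of_mem (hcut x hx y hy hxy ▸ Sym2.mem_mk_right x y))
    · exact Or.inl (hE.exists_veDominates_of_mem (hcut y hy x hx hxy.symm ▸ Sym2.mem_mk_left x y))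
    · exact Or.inl (hE.exists_veDominates hx hy hxy)
  · rintro z (⟨z, hz, rfl⟩ | hz)
    · obtain ⟨x, y, hpriv⟩ := (isMinimalVEDomSet_iff.mp hD).2 z hz
      rw [isVEPrivateEdge_induce_iff] at hpriv
      exact ⟨x, y, hpriv.union fun d hd => hBdom d (hE.subset hd) x x.2 y y.2⟩
    · obtain ⟨x, hx, y, hy, hpriv⟩ := hE.exists_isVEPrivateEdge z hz
      refine ⟨x, y, Set.union_comm E _ ▸ hpriv.union ?_⟩
      rintro _ ⟨d, -, rfl⟩
      exact hAdom d d.2 x hx y hy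

variable [Finite V] (hW : WellVEDominated G) (hAB : IsCompl A B)
  (hcut : ∀ x ∈ A, ∀ y ∈ B, G.Adj x y → y = v)
include hW hAB hcut

theorem ncard_add_ncard_eq_gammaVE {D : Set A} (hD : IsMinimalVEDomSet (G.induce A) D) :
    D.ncard + E.ncard = gammaVE G := by
  have hdisj : Disjoint (Subtype.val '' D) E :=
    hAB.disjoint.mono (by simp) (hE.subset.trans Set.sdiff_subset)
  rw [← hW.ncard_eq_gammaVE (hE.isMinimalVEDomSet_union hAB hcut hD),
    Set.ncard_union_eq hdisj, Set.ncard_image_of_injective _ Subtype.val_injective]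

theorem wellVEDominated_induce : WellVEDominated (G.induce A) := fun D₁ D₂ h₁ h₂ => by
  have := hE.ncard_add_ncard_eq_gammaVE hW hAB hcut h₁
  have := hE.ncard_add_ncard_eq_gammaVE hW hAB hcut h₂
  omega

theorem gammaVE_eq_add (hWB : WellVEDominated (G.induce B)) :
    gammaVE G = gammaVE (G.induce A) + gammaVE (G.induce B) := by
  obtain ⟨D, hD, hcard⟩ := exists_isMinimalVEDomSet_ncard_eq_gammaVE (G.induce A)
  rw [← hE.ncard_add_ncard_eq_gammaVE hW hAB hcut hD, hcard,
    ← hWB.ncard_eq_gammaVE hE.isMinimalVEDomSet_induce,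
    Set.ncard_preimage_of_injective_subset_range Subtype.val_injective
      (by simpa using hE.subset.trans Set.sdiff_subset)]

end IsRobustVEDomSet

theorem exists_isRobustVEDomSet [Finite V] {s l : V} (hs : G.neighborSet s = {v, l})
    (hl : G.neighborSet l = {s}) (hsB : s ∈ B) (hlB : l ∈ B) (hlv : l ≠ v) :
    ∃ E, IsRobustVEDomSet G B v E := by
  have hsv : G.Adj s v := by simp [← mem_neighborSet, hs]
  have hsl : G.Adj s l := by simp [← mem_neighborSet, hs]
  let P : Set V → Prop := fun X => X ⊆ B \ {v, l} ∧
    ∀ x ∈ B \ {v}, ∀ y ∈ B \ {v}, G.Adj x y → ∃ d ∈ X, VEDominates G d s(x, y)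
  have hP : P (B \ {v, l}) := by
    refine ⟨subset_rfl, fun x hx y hy hxy => ?_⟩
    by_cases hxl : x = l
    · have hys : y = s := by simpa [← mem_neighborSet, hl, hxl] using hxy
      refine ⟨s, ⟨hsB, by simp [hsv.ne, hsl.ne]⟩, veDominates_mk_iff.mpr (by simp [hys])⟩
    · exact ⟨x, ⟨hx.1, by simpa [hxl] using hx.2⟩, veDominates_mk_iff.mpr (Or.inl rfl)⟩
  obtain ⟨E, -, hmin⟩ := exists_minimal_le_of_wellFoundedLT P _ hP
  have hsE : s ∈ E := by
    obtain ⟨d, hd, hdom⟩ := hmin.1.2 s ⟨hsB, hsv.ne⟩ l ⟨hlB, hlv⟩ hsl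
    have hdvl := (hmin.1.1 hd).2
    rcases veDominates_mk_iff.mp hdom with rfl | hds | rfl | hdl
    · exact hd
    · exact (hdvl (by simpa [← mem_neighborSet, hs] using hds.symm)).elim
    · exact (hdvl (by simp)).elim
    · rwa [show d = s by simpa [← mem_neighborSet, hl] using hdl.symm] at hd
  refine ⟨E, ⟨fun x hx => ?_, ⟨s, hsE, hsv⟩, hmin.1.2, fun z hz => ?_⟩⟩
  · exact ⟨(hmin.1.1 hx).1, fun h => (hmin.1.1 hx).2 (by simp_all)⟩
  · by_contra hnot
    simp only [IsVEPrivateEdge, not_exists, not_and, not_forall] at hnot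
    refine hmin.notMem_of_prop_sdiff_singleton ⟨Set.sdiff_subset.trans hmin.1.1, ?_⟩ hz
    intro x hx y hy hxy
    obtain ⟨d, hd, hdom, hdz⟩ := hnot x hx y hy hxy
    exact ⟨d, ⟨hd, hdz⟩, hdom⟩

end Robust

section GoodPendant

variable {V : Type*} {G : SimpleGraph V}

lemma IsGoodPendant.neighborSet_leaf {s l : V} (h : IsGoodPendant G s l) :
    G.neighborSet l = {s} := by
  obtain ⟨a, ha⟩ := Set.ncard_eq_one.mp h.2.1
  have hs : s ∈ G.neighborSet l := h.1.symm
  rw [ha, Set.mem_singleton_iff] at hs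
  rw [ha, hs]

lemma IsGoodPendant.neighborSet_support {s l v : V} (h : IsGoodPendant G s l) (hv : G.Adj s v)
    (hvl : v ≠ l) : G.neighborSet s = {v, l} := by
  refine (Set.eq_of_subset_of_ncard_le (t := G.neighborSet s) ?_ ?_ ?_).symm
  · exact Set.insert_subset_iff.mpr ⟨hv, Set.singleton_subset_iff.mpr h.1⟩
  · rw [h.2.2, Set.ncard_pair hvl]
  · exact Set.finite_of_ncard_ne_zero (by rw [h.2.2]; norm_num)

lemma ne_of_mem_goodLeaves_of_mem_goodSupports {x y : V} (hx : x ∈ goodLeaves G)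
    (hy : y ∈ goodSupports G) : x ≠ y := by
  rintro rfl
  obtain ⟨_, h₁⟩ := hx
  obtain ⟨_, h₂⟩ := hy
  simpa using h₁.2.1.symm.trans h₂.2.2

theorem card_le_four_of_adj_of_mem_goodSupports [Fintype V] (hG : G.Connected) {u v : V}
    (huv : G.Adj u v) (hu : u ∈ goodSupports G) (hv : v ∈ goodSupports G) :
    Fintype.card V ≤ 4 := by
  classical
  obtain ⟨l₁, h₁⟩ := hu
  obtain ⟨l₂, h₂⟩ := hv
  have hN₁ := h₁.neighborSet_support huv
    (ne_of_mem_goodLeaves_of_mem_goodSupports ⟨u, h₁⟩ ⟨l₂, h₂⟩).symm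
  have hN₂ := h₂.neighborSet_support huv.symm
    (ne_of_mem_goodLeaves_of_mem_goodSupports ⟨v, h₂⟩ ⟨l₁, h₁⟩).symm
  have huniv : ({u, v, l₁, l₂} : Set V) = Set.univ := by
    refine hG.eq_univ_of_neighborSet_subset ?_ ⟨u, by simp⟩
    rintro x (rfl | rfl | rfl | rfl)
    · simp [hN₁, Set.insert_subset_iff]
    · simp [hN₂, Set.insert_subset_iff]
    · simp [h₁.neighborSet_leaf]
    · simp [h₂.neighborSet_leaf]
  calc Fintype.card V = (Finset.univ : Finset V).card := Finset.card_univ.symm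
    _ ≤ ({u, v, l₁, l₂} : Finset V).card := Finset.card_le_card fun x _ => by
        simpa using (huniv ▸ Set.mem_univ x : x ∈ ({u, v, l₁, l₂} : Set V))
    _ ≤ 4 := Finset.card_le_four

theorem notMem_goodSupports_of_mem_goodW [Fintype V] (hG : G.Connected)
    (hcard : 4 < Fintype.card V) {u v : V} (hu : u ∈ goodW G) (hv : v ∉ goodLeaves G)
    (huv : G.Adj u v) : u ∉ goodSupports G := by
  rintro ⟨l, hl⟩
  obtain ⟨⟨s, hs, hus⟩, -⟩ := hu
  have hN := hl.neighborSet_support huv fun h => hv (h ▸ ⟨u, hl⟩)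
  obtain rfl | rfl : s = v ∨ s = l := by simpa [← mem_neighborSet, hN] using hus
  · exact hcard.not_ge (card_le_four_of_adj_of_mem_goodSupports hG huv ⟨l, hl⟩ hs)
  · exact ne_of_mem_goodLeaves_of_mem_goodSupports ⟨u, hl⟩ hs rfl

theorem exists_isRobustVEDomSet_of_mem_goodW [Fintype V] (hG : G.Connected)
    (hcard : 4 < Fintype.card V) {A B : Set V} (hAB : IsCompl A B) {u v : V}
    (hcut : ∀ x ∈ A, ∀ y ∈ B, G.Adj x y → x = u) (hvB : v ∈ B) (hu : u ∈ goodW G)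
    (hv : v ∈ goodW G) : ∃ E, IsRobustVEDomSet G B v E := by
  obtain ⟨⟨s, ⟨l, hsl⟩, hvs⟩, hvL⟩ := hv
  have hmemB : ∀ {x y : V}, y ∈ B → G.Adj x y → x ≠ u → x ∈ B := fun hy hxy hxu =>
    by_contra fun hx => hxu (hcut _ (hAB.eq_compl ▸ hx) _ hy hxy)
  have hsu : s ≠ u := by
    rintro rfl
    exact notMem_goodSupports_of_mem_goodW hG hcard hu hvL hvs.symm ⟨l, hsl⟩
  have hsB : s ∈ B := hmemB hvB hvs.symm hsu
  have hlB : l ∈ B := hmemB hsB hsl.1.symm fun h => hu.2 (h ▸ ⟨s, hsl⟩)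
  have hlv : l ≠ v := fun h => hvL (h ▸ ⟨s, hsl⟩)
  exact exists_isRobustVEDomSet (hsl.neighborSet_support hvs.symm hlv.symm)
    hsl.neighborSet_leaf hsB hlB hlv

end GoodPendant

theorem stmt_17_general {V : Type*} [Fintype V] (T : SimpleGraph V) (hT : T.IsTree)
    (hW : WellVEDominated T)
    (hcard : 6 ≤ Fintype.card V)
    (u v : V) (huv : T.Adj u v) (hu : u ∈ goodW T) (hv : v ∈ goodW T) :
    ((T.deleteEdges {s(u, v)}).induce
        ((T.deleteEdges {s(u, v)}).connectedComponentMk u).supp).IsTree ∧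
    ((T.deleteEdges {s(u, v)}).induce
        ((T.deleteEdges {s(u, v)}).connectedComponentMk v).supp).IsTree ∧
    WellVEDominated ((T.deleteEdges {s(u, v)}).induce
        ((T.deleteEdges {s(u, v)}).connectedComponentMk u).supp) ∧
    WellVEDominated ((T.deleteEdges {s(u, v)}).induce
        ((T.deleteEdges {s(u, v)}).connectedComponentMk v).supp) ∧
    gammaVE T =
      gammaVE ((T.deleteEdges {s(u, v)}).induce
        ((T.deleteEdges {s(u, v)}).connectedComponentMk u).supp) +
      gammaVE ((T.deleteEdges {s(u, v)}).induce
        ((T.deleteEdges {s(u, v)}).connectedComponentMk v).supp) := by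
  set A := ((T.deleteEdges {s(u, v)}).connectedComponentMk u).supp
  set B := ((T.deleteEdges {s(u, v)}).connectedComponentMk v).supp
  have hb : T.IsBridge s(u, v) := isAcyclic_iff_forall_adj_isBridge.mp hT.isAcyclic huv
  have hAB : IsCompl A B := isCompl_supp_deleteEdges hT.connected hb
  have huA : u ∈ A := rfl
  have hvB : v ∈ B := rfl
  have hcut : ∀ x ∈ A, ∀ y ∈ B, T.Adj x y → x = u ∧ y = v := fun _ hx _ hy =>
    eq_and_eq_of_adj_of_mem_supp hb hx hy
  obtain ⟨E, hE⟩ := exists_isRobustVEDomSet_of_mem_goodW hT.connected (by omega) hAB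
    (fun x hx y hy h => (hcut x hx y hy h).1) hvB hu hv
  obtain ⟨F, hF⟩ := exists_isRobustVEDomSet_of_mem_goodW hT.connected (by omega) hAB.symm
    (fun x hx y hy h => (hcut y hy x hx h.symm).2) huA hv hu
  have hacyc := hT.isAcyclic.anti (deleteEdges_le {s(u, v)})
  refine ⟨isTree_induce_supp hacyc _, isTree_induce_supp hacyc _, ?_⟩
  rw [induce_deleteEdges_of_notMem (Or.inr (hAB.disjoint.notMem_of_mem_right hvB)),
    induce_deleteEdges_of_notMem (Or.inl (hAB.disjoint.notMem_of_mem_left huA))]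
  have hWB := hF.wellVEDominated_induce hW hAB.symm fun x hx y hy h => (hcut y hy x hx h.symm).1
  exact ⟨hE.wellVEDominated_induce hW hAB (fun x hx y hy h => (hcut x hx y hy h).2), hWB,
    hE.gammaVE_eq_add hW hAB (fun x hx y hy h => (hcut x hx y hy h).2) hWB⟩

/-- Unit-cut decomposition: deleting an edge of `T` with both endpoints in
`W_T` yields two well-ve-dominated trees whose ve-domination numbers add up
to `γ_ve(T)`. -/
theorem stmt_17 {V : Type*} [Fintype V] (T : SimpleGraph V) (hT : T.IsTree)
    (hred : Reduced T) (hW : WellVEDominated T)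
    (hcard : 6 ≤ Fintype.card V)
    (u v : V) (huv : T.Adj u v) (hu : u ∈ goodW T) (hv : v ∈ goodW T) :
    ((T.deleteEdges {s(u, v)}).induce
        ((T.deleteEdges {s(u, v)}).connectedComponentMk u).supp).IsTree ∧
    ((T.deleteEdges {s(u, v)}).induce
        ((T.deleteEdges {s(u, v)}).connectedComponentMk v).supp).IsTree ∧
    WellVEDominated ((T.deleteEdges {s(u, v)}).induce
        ((T.deleteEdges {s(u, v)}).connectedComponentMk u).supp) ∧
    WellVEDominated ((T.deleteEdges {s(u, v)}).induce
        ((T.deleteEdges {s(u, v)}).connectedComponentMk v).supp) ∧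
    gammaVE T =
      gammaVE ((T.deleteEdges {s(u, v)}).induce
        ((T.deleteEdges {s(u, v)}).connectedComponentMk u).supp) +
      gammaVE ((T.deleteEdges {s(u, v)}).induce
        ((T.deleteEdges {s(u, v)}).connectedComponentMk v).supp) :=
  stmt_17_general T hT hW hcard u v huv hu hv
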